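/- Replacement distance query decomposition (Bernstein–Karger correctness): let e = (u,v) lie on a shortest x-y path, and let c_x and c_y be vertices on this path with c_x before u and v before c_y, such that c_x lies on the path (so d(x,y,·) subpaths compose). If the replacement path R for (x,y,e) diverges from the original path after c_x or re-merges before c_y, then d(x,y,e) = min( d(x,c_x) + d(c_x,y,e), d(x,c_y,e) + d(c_y,y) ); in general, d(x,y,e) = min( d(x,c_x) + d(c_x,y,e), d(x,c_y,e) + d(c_y,y), D ) where D is the minimum weight of an x-y path avoiding the entire subpath of the original shortest path from c_x to c_y. -/

import Mathlib

/-!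
Write `g(c) = d(x,c) + d(c,y,e)` for a vertex `c` of the shortest path `P`. Along `P` up to the
tail of `e`, `g` is nondecreasing: prefixes of a shortest path are shortest and the stretch of `P`
between two such vertices avoids `e`. Since `g(x) = d(x,y,e)`, this gives `d(x,y,e) ≤ g(c_x)`.
Conversely, an `x`-`y` path `R` avoiding `e` either avoids the whole `c_x`-`c_y` segment, or
passes through a vertex `b` of the segment lying before `e` (then `g(c_x) ≤ g(b) ≤ w(R)`) or
after `e`. The last case, like the bound by `d(x,c_y,e) + d(c_y,y)`, is the mirror image under
reversing all paths and edges.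
-/

open scoped ENNReal

variable {V : Type*}

/-- `p` is a walk/path from `u` to `v` using edges of `E`, given as its list of vertices. -/
def IsPath (E : Set (V × V)) (u v : V) (p : List V) : Prop :=
  p.head? = some u ∧ p.getLast? = some v ∧ List.Chain' (fun a b => (a, b) ∈ E) p

/-- The list of (directed) edges traversed by a path `p`. -/
def edgesOf (p : List V) : List (V × V) := p.zip p.tail

/-- Total weight of a path. -/
noncomputable def pweight (w : V × V → ℝ≥0∞) (p : List V) : ℝ≥0∞ := ((edgesOf p).map w).sum

/-- Number of edges (hops) of a path. -/
def hops (p : List V) : ℕ := p.length - 1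

/-- Shortest-path distance from `u` to `v`. -/
noncomputable def gdist (E : Set (V × V)) (w : V × V → ℝ≥0∞) (u v : V) : ℝ≥0∞ :=
  sInf {c | ∃ p, IsPath E u v p ∧ pweight w p = c}

/-- Replacement distance: shortest-path distance from `u` to `v` avoiding edge `e`. -/
noncomputable def dRepl (E : Set (V × V)) (w : V × V → ℝ≥0∞) (u v : V) (e : V × V) : ℝ≥0∞ :=
  sInf {c | ∃ p, IsPath E u v p ∧ e ∉ edgesOf p ∧ pweight w p = c}

/-- `h`-hop-limited replacement distance from `u` to `v` avoiding edge `e`. -/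
noncomputable def dh (E : Set (V × V)) (w : V × V → ℝ≥0∞) (h : ℕ) (u v : V) (e : V × V) :
    ℝ≥0∞ :=
  sInf {c | ∃ p, IsPath E u v p ∧ hops p ≤ h ∧ e ∉ edgesOf p ∧ pweight w p = c}

section Edges

lemma edgesOf_cons_cons (a b : V) (l : List V) :
    edgesOf (a :: b :: l) = (a, b) :: edgesOf (b :: l) := rfl

lemma edgesOf_append_cons (s : List V) (b : V) (t : List V) :
    edgesOf (s ++ b :: t) = edgesOf (s ++ [b]) ++ edgesOf (b :: t) := by
  induction s with
  | nil => simp [edgesOf]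
  | cons a s ih =>
    cases s with
    | nil => rfl
    | cons a' s => simp only [List.cons_append, edgesOf_cons_cons] at ih ⊢; rw [ih]

lemma mem_edgesOf_iff {f : V × V} {p : List V} :
    f ∈ edgesOf p ↔ ∃ s t, p = s ++ f.1 :: f.2 :: t := by
  induction p with
  | nil => simp [edgesOf]
  | cons a l ih =>
    cases l with
    | nil => simp [edgesOf, List.cons_eq_append_iff]
    | cons b l =>
      rw [edgesOf_cons_cons, List.mem_cons, ih]
      constructor
      · rintro (rfl | ⟨s, t, h⟩)
        · exact ⟨[], l, rfl⟩
        · exact ⟨a :: s, t, by rw [h]; rfl⟩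
      · rintro ⟨_ | ⟨c, s⟩, t, h⟩
        · simp_all
        · simp only [List.cons_append, List.cons.injEq] at h
          exact Or.inr ⟨s, t, h.2⟩

lemma mem_edgesOf_of_infix {f : V × V} {p q : List V} (hpq : p <:+: q) (hf : f ∈ edgesOf p) :
    f ∈ edgesOf q := by
  obtain ⟨a, b, rfl⟩ := hpq
  obtain ⟨s, t, rfl⟩ := mem_edgesOf_iff.1 hf
  exact mem_edgesOf_iff.2 ⟨a ++ s, t ++ b, by simp⟩

lemma nodup_edgesOf {p : List V} (h : p.Nodup) : (edgesOf p).Nodup := by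
  induction p with
  | nil => exact List.nodup_nil
  | cons a l ih =>
    cases l with
    | nil => exact List.nodup_nil
    | cons b l =>
      rw [edgesOf_cons_cons]
      refine (ih h.of_cons).cons fun hab => h.notMem ?_
      obtain ⟨s, t, hst⟩ := mem_edgesOf_iff.1 hab
      simp [hst]

lemma notMem_edgesOf_prefix_of_nodup {e : V × V} {s t : List V} {b : V}
    (hnodup : (s ++ b :: t).Nodup) (he : e ∈ edgesOf (b :: t)) : e ∉ edgesOf (s ++ [b]) := by
  have := nodup_edgesOf hnodup
  rw [edgesOf_append_cons] at this
  exact fun h => List.disjoint_of_nodup_append this h he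

lemma edgesOf_reverse (p : List V) :
    edgesOf p.reverse = ((edgesOf p).map Prod.swap).reverse := by
  induction p with
  | nil => rfl
  | cons a l ih =>
    cases l with
    | nil => rfl
    | cons b l =>
      rw [List.reverse_cons, List.reverse_cons, List.append_assoc, List.singleton_append,
        edgesOf_append_cons, ← List.reverse_cons, ih, edgesOf_cons_cons]
      simp [edgesOf]

lemma mem_edgesOf_reverse {f : V × V} {p : List V} :
    f ∈ edgesOf p.reverse ↔ f.swap ∈ edgesOf p := by
  simp [edgesOf_reverse, Prod.swap_eq_iff_eq_swap]

lemma mem_edgesOf_before_or_after {e f : V × V} {p : List V} (hf : f ∈ edgesOf p)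
    (he : e ∈ edgesOf p) (hef : e ≠ f) :
    (∃ s t, p = s ++ f.1 :: t ∧ e ∈ edgesOf (s ++ [f.1])) ∨
      (∃ s t, p = s ++ f.2 :: t ∧ e ∈ edgesOf (f.2 :: t)) := by
  obtain ⟨s, t, rfl⟩ := mem_edgesOf_iff.1 hf
  rw [edgesOf_append_cons, edgesOf_cons_cons, List.mem_append, List.mem_cons] at he
  rcases he with he | rfl | he
  · exact Or.inl ⟨s, f.2 :: t, rfl, he⟩
  · exact absurd rfl hef
  · exact Or.inr ⟨s ++ [f.1], t, by simp, he⟩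

end Edges

section Paths

variable {E : Set (V × V)} {w : V × V → ℝ≥0∞}

lemma isPath_append_cons_iff {x y b : V} {s t : List V} :
    IsPath E x y (s ++ b :: t) ↔ IsPath E x b (s ++ [b]) ∧ IsPath E b y (b :: t) := by
  unfold IsPath List.Chain'
  rw [List.isChain_split, List.getLast?_append_cons]
  simp only [List.head?_append, List.head?_cons, Option.or_some, Option.some.injEq,
    List.getLast?_append, List.getLast?_singleton, Option.some_or, true_and]
  tauto

lemma pweight_append_cons (s : List V) (b : V) (t : List V) :
    pweight w (s ++ b :: t) = pweight w (s ++ [b]) + pweight w (b :: t) := by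
  rw [pweight, edgesOf_append_cons, List.map_append, List.sum_append, pweight, pweight]

lemma IsPath.exists_append {x y b : V} {p q : List V} (hp : IsPath E x b p)
    (hq : IsPath E b y q) :
    ∃ r, IsPath E x y r ∧ pweight w r = pweight w p + pweight w q ∧
      edgesOf r = edgesOf p ++ edgesOf q := by
  obtain ⟨p, rfl⟩ := List.getLast?_eq_some_iff.1 hp.2.1
  obtain ⟨q, rfl⟩ := List.head?_eq_some_iff.1 hq.1
  exact ⟨p ++ b :: q, isPath_append_cons_iff.2 ⟨hp, hq⟩, pweight_append_cons ..,
    edgesOf_append_cons ..⟩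

lemma isPath_reverse_iff {u v : V} {p : List V} :
    IsPath (Prod.swap ⁻¹' E) v u p.reverse ↔ IsPath E u v p := by
  simp only [IsPath, List.Chain', List.isChain_reverse, List.head?_reverse, List.getLast?_reverse,
    Set.mem_preimage, Prod.swap_prod_mk]
  tauto

lemma pweight_reverse (p : List V) : pweight (w ∘ Prod.swap) p.reverse = pweight w p := by
  simp [pweight, edgesOf_reverse, Function.comp_def]

end Paths

section Distances

variable {E : Set (V × V)} {w : V × V → ℝ≥0∞}

lemma gdist_le_pweight {u v : V} {p : List V} (h : IsPath E u v p) :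
    gdist E w u v ≤ pweight w p :=
  sInf_le ⟨p, h, rfl⟩

lemma dRepl_le_pweight {u v : V} {e : V × V} {p : List V} (h : IsPath E u v p)
    (he : e ∉ edgesOf p) : dRepl E w u v e ≤ pweight w p :=
  sInf_le ⟨p, h, he, rfl⟩

lemma gdist_le_dRepl (u v : V) (e : V × V) : gdist E w u v ≤ dRepl E w u v e :=
  sInf_le_sInf fun _ ⟨p, hp, _, hc⟩ => ⟨p, hp, hc⟩

lemma gdist_self (x : V) : gdist E w x x = 0 :=
  nonpos_iff_eq_zero.1 (sInf_le ⟨[x], ⟨rfl, rfl, List.isChain_singleton x⟩, rfl⟩)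

lemma gdist_le_add (x b y : V) : gdist E w x y ≤ gdist E w x b + gdist E w b y := by
  unfold gdist
  rw [ENNReal.sInf_add]
  refine le_iInf₂ fun _ ⟨p, hp, hp'⟩ => ?_
  rw [ENNReal.add_sInf]
  refine le_iInf₂ fun _ ⟨q, hq, hq'⟩ => ?_
  obtain ⟨r, hr, hwr, -⟩ := hp.exists_append (w := w) hq
  exact hp' ▸ hq' ▸ hwr ▸ sInf_le ⟨r, hr, rfl⟩

lemma dRepl_le_pweight_add {a b c : V} {e : V × V} {q : List V} (hq : IsPath E a b q)
    (he : e ∉ edgesOf q) : dRepl E w a c e ≤ pweight w q + dRepl E w b c e := by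
  unfold dRepl
  rw [ENNReal.add_sInf]
  refine le_iInf₂ ?_
  rintro _ ⟨r, hr, her, rfl⟩
  obtain ⟨g, hg, hwg, hge⟩ := hq.exists_append (w := w) hr
  exact hwg ▸ dRepl_le_pweight hg (by simp [hge, he, her])

lemma pweight_prefix_eq_gdist {x y b : V} {s t : List V} (hP : IsPath E x y (s ++ b :: t))
    (hshort : pweight w (s ++ b :: t) = gdist E w x y) (hfin : gdist E w x y ≠ ⊤) :
    pweight w (s ++ [b]) = gdist E w x b := by
  obtain ⟨hxb, hby⟩ := isPath_append_cons_iff.1 hP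
  refine le_antisymm ?_ (gdist_le_pweight hxb)
  have hsuffix : pweight w (b :: t) ≠ ⊤ :=
    ne_top_of_le_ne_top hfin (by rw [← hshort, pweight_append_cons]; exact le_add_self)
  refine (ENNReal.add_le_add_iff_right hsuffix).1 ?_
  calc pweight w (s ++ [b]) + pweight w (b :: t) = gdist E w x y := by
        rw [← pweight_append_cons, hshort]
    _ ≤ gdist E w x b + gdist E w b y := gdist_le_add x b y
    _ ≤ gdist E w x b + pweight w (b :: t) := add_le_add_right (gdist_le_pweight hby) _

lemma gdist_add_dRepl_le_pweight {x y b : V} {e : V × V} {r r' : List V}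
    (hR : IsPath E x y (r ++ b :: r')) (he : e ∉ edgesOf (r ++ b :: r')) :
    gdist E w x b + dRepl E w b y e ≤ pweight w (r ++ b :: r') := by
  obtain ⟨hxb, hby⟩ := isPath_append_cons_iff.1 hR
  rw [edgesOf_append_cons, List.mem_append, not_or] at he
  rw [pweight_append_cons]
  exact add_le_add (gdist_le_pweight hxb) (dRepl_le_pweight hby he.2)

lemma gdist_add_dRepl_le_of_shortest {x y b c : V} {e : V × V} {s t s₁ s₂ : List V}
    (hP : IsPath E x y (s ++ b :: t)) (hshort : pweight w (s ++ b :: t) = gdist E w x y)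
    (hc : s ++ [b] = s₁ ++ c :: s₂) (he : e ∉ edgesOf (s ++ [b])) :
    gdist E w x c + dRepl E w c y e ≤ gdist E w x b + dRepl E w b y e := by
  by_cases htop : gdist E w x b + dRepl E w b y e = ⊤
  · exact htop ▸ le_top
  have hfin : gdist E w x y ≠ ⊤ := ne_top_of_le_ne_top htop
    ((gdist_le_add x b y).trans (add_le_add_right (gdist_le_dRepl b y e) _))
  have hxb := (isPath_append_cons_iff.1 hP).1
  rw [hc] at hxb he
  obtain ⟨hxc, hcb⟩ := isPath_append_cons_iff.1 hxb
  rw [edgesOf_append_cons, List.mem_append, not_or] at he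
  calc gdist E w x c + dRepl E w c y e
      ≤ pweight w (s₁ ++ [c]) + (pweight w (c :: s₂) + dRepl E w b y e) :=
        add_le_add (gdist_le_pweight hxc) (dRepl_le_pweight_add hcb he.2)
    _ = gdist E w x b + dRepl E w b y e := by
        rw [← add_assoc, ← pweight_append_cons, ← hc, pweight_prefix_eq_gdist hP hshort hfin]

lemma gdist_reverse (u v : V) :
    gdist (Prod.swap ⁻¹' E) (w ∘ Prod.swap) v u = gdist E w u v := by
  refine congrArg sInf (Set.ext fun c => ⟨?_, ?_⟩)
  · rintro ⟨p, hp, rfl⟩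
    exact ⟨p.reverse, isPath_reverse_iff.1 (by rwa [List.reverse_reverse]),
      by rw [← pweight_reverse, List.reverse_reverse]⟩
  · rintro ⟨p, hp, rfl⟩
    exact ⟨p.reverse, isPath_reverse_iff.2 hp, pweight_reverse p⟩

lemma dRepl_reverse (u v : V) (e : V × V) :
    dRepl (Prod.swap ⁻¹' E) (w ∘ Prod.swap) v u e.swap = dRepl E w u v e := by
  refine congrArg sInf (Set.ext fun c => ⟨?_, ?_⟩)
  · rintro ⟨p, hp, he, rfl⟩
    exact ⟨p.reverse, isPath_reverse_iff.1 (by rwa [List.reverse_reverse]),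
      by rwa [mem_edgesOf_reverse], by rw [← pweight_reverse, List.reverse_reverse]⟩
  · rintro ⟨p, hp, he, rfl⟩
    exact ⟨p.reverse, isPath_reverse_iff.2 hp, by rwa [mem_edgesOf_reverse, Prod.swap_swap],
      pweight_reverse p⟩

end Distances

section ShortestPathDecomposition

variable {E : Set (V × V)} {w : V × V → ℝ≥0∞} {x y c : V} {e : V × V}
  {pre mid post : List V}

lemma dRepl_le_gdist_add_dRepl (hP : IsPath E x y (pre ++ mid ++ post))
    (hnodup : (pre ++ mid ++ post).Nodup) (hshort : pweight w (pre ++ mid ++ post) = gdist E w x y)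
    (hhead : mid.head? = some c) (he : e ∈ edgesOf mid) :
    dRepl E w x y e ≤ gdist E w x c + dRepl E w c y e := by
  obtain ⟨mt, rfl⟩ := List.head?_eq_some_iff.1 hhead
  rw [show pre ++ c :: mt ++ post = pre ++ c :: (mt ++ post) by simp] at hP hnodup hshort
  obtain ⟨s, hx⟩ := List.head?_eq_some_iff.1 (isPath_append_cons_iff.1 hP).1.1
  have he' : e ∈ edgesOf (c :: (mt ++ post)) :=
    mem_edgesOf_of_infix (List.prefix_append _ _).isInfix he
  calc dRepl E w x y e = gdist E w x x + dRepl E w x y e := by rw [gdist_self, zero_add]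
    _ ≤ gdist E w x c + dRepl E w c y e :=
        gdist_add_dRepl_le_of_shortest (s₁ := []) hP hshort hx
          (notMem_edgesOf_prefix_of_nodup hnodup he')

lemma gdist_add_dRepl_le_of_mem_before {m₁ m₂ R : List V} {b : V}
    (hP : IsPath E x y (pre ++ mid ++ post)) (hnodup : (pre ++ mid ++ post).Nodup)
    (hshort : pweight w (pre ++ mid ++ post) = gdist E w x y) (hhead : mid.head? = some c)
    (hmid : mid = m₁ ++ b :: m₂) (he : e ∈ edgesOf (b :: m₂))
    (hR : IsPath E x y R) (heR : e ∉ edgesOf R) (hbR : b ∈ R) :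
    gdist E w x c + dRepl E w c y e ≤ pweight w R := by
  obtain ⟨r, r', rfl⟩ := List.append_of_mem hbR
  subst hmid
  rw [show pre ++ (m₁ ++ b :: m₂) ++ post = (pre ++ m₁) ++ b :: (m₂ ++ post) by simp]
    at hP hnodup hshort
  obtain ⟨s, hc⟩ : ∃ s, m₁ ++ [b] = c :: s :=
    List.head?_eq_some_iff.1 (by cases m₁ <;> simpa using hhead)
  have he' : e ∈ edgesOf (b :: (m₂ ++ post)) :=
    mem_edgesOf_of_infix (List.prefix_append _ _).isInfix he
  exact (gdist_add_dRepl_le_of_shortest hP hshort (by rw [List.append_assoc, hc])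
    (notMem_edgesOf_prefix_of_nodup hnodup he')).trans (gdist_add_dRepl_le_pweight hR heR)

lemma dRepl_le_dRepl_add_gdist (hP : IsPath E x y (pre ++ mid ++ post))
    (hnodup : (pre ++ mid ++ post).Nodup) (hshort : pweight w (pre ++ mid ++ post) = gdist E w x y)
    (hlast : mid.getLast? = some c) (he : e ∈ edgesOf mid) :
    dRepl E w x y e ≤ dRepl E w x c e + gdist E w c y := by
  have hrev : (pre ++ mid ++ post).reverse = post.reverse ++ mid.reverse ++ pre.reverse := by simp
  have := dRepl_le_gdist_add_dRepl (E := Prod.swap ⁻¹' E) (w := w ∘ Prod.swap) (e := e.swap)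
    (hrev ▸ isPath_reverse_iff.2 hP) (hrev ▸ List.nodup_reverse.2 hnodup)
    (by rw [← hrev, pweight_reverse, gdist_reverse, hshort]) (by rwa [List.head?_reverse])
    (mem_edgesOf_reverse.2 (by rwa [Prod.swap_swap]))
  rwa [dRepl_reverse, gdist_reverse, dRepl_reverse, add_comm] at this

lemma dRepl_add_gdist_le_of_mem_after {m₁ m₂ R : List V} {b : V}
    (hP : IsPath E x y (pre ++ mid ++ post)) (hnodup : (pre ++ mid ++ post).Nodup)
    (hshort : pweight w (pre ++ mid ++ post) = gdist E w x y) (hlast : mid.getLast? = some c)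
    (hmid : mid = m₁ ++ b :: m₂) (he : e ∈ edgesOf (m₁ ++ [b]))
    (hR : IsPath E x y R) (heR : e ∉ edgesOf R) (hbR : b ∈ R) :
    dRepl E w x c e + gdist E w c y ≤ pweight w R := by
  have hrev : (pre ++ mid ++ post).reverse = post.reverse ++ mid.reverse ++ pre.reverse := by simp
  have he' : e.swap ∈ edgesOf (b :: m₁.reverse) := by
    simpa using (mem_edgesOf_reverse (p := m₁ ++ [b])).2 (by rwa [Prod.swap_swap])
  have := gdist_add_dRepl_le_of_mem_before (E := Prod.swap ⁻¹' E) (w := w ∘ Prod.swap)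
    (m₁ := m₂.reverse) (hrev ▸ isPath_reverse_iff.2 hP) (hrev ▸ List.nodup_reverse.2 hnodup)
    (by rw [← hrev, pweight_reverse, gdist_reverse, hshort]) (by rwa [List.head?_reverse])
    (by simp [hmid]) he' (isPath_reverse_iff.2 hR) (by rwa [mem_edgesOf_reverse, Prod.swap_swap])
    (List.mem_reverse.2 hbR)
  rwa [gdist_reverse, dRepl_reverse, pweight_reverse, add_comm] at this

end ShortestPathDecomposition

/-- Bernstein–Karger query decomposition. Let `P` be a shortest (simple) `x`-`y`
path, decomposed as `P = pre ++ mid ++ post` where `mid` goes from `c_x` to `c_y` and contains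
the edge `e` (so `c_x` is weakly before `e` and `c_y` weakly after it). Then
`d(x,y,e) = min(d(x,c_x) + d(c_x,y,e), d(x,c_y,e) + d(c_y,y), D)` where `D` is the minimum
weight of an `x`-`y` path avoiding every edge of the `c_x`-`c_y` subpath `mid`. -/
theorem stmt18 (E : Set (V × V)) (w : V × V → ℝ≥0∞) (x y cx cy : V) (e : V × V)
    (P pre mid post : List V)
    (hP : IsPath E x y P) (hnodup : P.Nodup) (hshort : pweight w P = gdist E w x y)
    (hdecomp : P = pre ++ mid ++ post)
    (hhead : mid.head? = some cx) (hlast : mid.getLast? = some cy)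
    (he : e ∈ edgesOf mid) :
    dRepl E w x y e =
      min (gdist E w x cx + dRepl E w cx y e)
        (min (dRepl E w x cy e + gdist E w cy y)
          (sInf {c | ∃ Q, IsPath E x y Q ∧ (∀ f ∈ edgesOf mid, f ∉ edgesOf Q) ∧
            pweight w Q = c})) := by
  subst hdecomp
  refine le_antisymm (le_min (dRepl_le_gdist_add_dRepl hP hnodup hshort hhead he)
    (le_min (dRepl_le_dRepl_add_gdist hP hnodup hshort hlast he)
      (sInf_le_sInf fun _ ⟨Q, hQ, hQmid, hc⟩ => ⟨Q, hQ, hQmid e he, hc⟩))) (le_sInf ?_)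
  rintro _ ⟨R, hR, heR, rfl⟩
  by_cases hmidR : ∀ f ∈ edgesOf mid, f ∉ edgesOf R
  · exact (min_le_right _ _).trans ((min_le_right _ _).trans (sInf_le ⟨R, hR, hmidR, rfl⟩))
  push Not at hmidR
  obtain ⟨f, hfmid, hfR⟩ := hmidR
  obtain ⟨r, r', hr⟩ := mem_edgesOf_iff.1 hfR
  rcases mem_edgesOf_before_or_after hfmid he (fun h => heR (h ▸ hfR)) with
    ⟨m₁, m₂, hmid, hbefore⟩ | ⟨m₁, m₂, hmid, hafter⟩
  · exact (min_le_right _ _).trans ((min_le_left _ _).trans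
      (dRepl_add_gdist_le_of_mem_after hP hnodup hshort hlast hmid hbefore hR heR (by simp [hr])))
  · exact (min_le_left _ _).trans
      (gdist_add_dRepl_le_of_mem_before hP hnodup hshort hhead hmid hafter hR heR (by simp [hr]))
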